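/- arXiv:1304.3373 — 2 statements merged into one kernel-verified Lean document; each statement's English description precedes it below -/
import Mathlib

section
/- Let G be an abelian p-group and x ∈ G with ⟨x⟩ ∩ G¹ = 0. Then every monomorphism f: ⟨x⟩ → G extends to an endomorphism of G if and only if for every y ∈ G with exp(y) = exp(x), the Ulm sequence of x is componentwise ≤ the Ulm sequence of y. -/
open AddSubgroup

/-- The `p`-height of an element, as an extended natural number. -/
noncomputable def pHeight (p : ℕ) {G : Type*} [AddCommGroup G] (x : G) : ℕ∞ :=
  sSup {n : ℕ∞ | ∃ m : ℕ, n = (m : ℕ∞) ∧ ∃ y : G, p ^ m • y = x}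

/-- `G` is an abelian `p`-group. -/
def IsPGrp (p : ℕ) (G : Type*) [AddCommGroup G] : Prop :=
  ∀ x : G, ∃ n : ℕ, p ^ n • x = 0

/-- `H ∈ Q(G)`: every homomorphism `H → G` extends to an endomorphism of `G`. -/
def InQ {G : Type*} [AddCommGroup G] (H : AddSubgroup G) : Prop :=
  ∀ f : H →+ G, ∃ g : G →+ G, ∀ x : H, g x = f x

/-- `H ∈ P(G)`: every monomorphism `H → G` extends to an endomorphism of `G`. -/
def InP {G : Type*} [AddCommGroup G] (H : AddSubgroup G) : Prop :=
  ∀ f : H →+ G, Function.Injective f → ∃ g : G →+ G, ∀ x : H, g x = f x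

/-- `H ∈ W(G)`: every endomorphism of `H` extends to an endomorphism of `G`. -/
def InW {G : Type*} [AddCommGroup G] (H : AddSubgroup G) : Prop :=
  ∀ f : H →+ H, ∃ g : G →+ G, ∀ x : H, g x = (f x : G)

/-- `K` is an internal direct sum of cyclic subgroups. -/
def IsDirectSumOfCyclics {G : Type*} [AddCommGroup G] (K : AddSubgroup G) : Prop :=
  ∃ (ι : Type) (a : ι → G), (∀ i, a i ∈ K) ∧ (⨆ i, zmultiples (a i)) = K ∧
    iSupIndep (fun i => zmultiples (a i))

/-- `K` is a `p`-pure subgroup: `pⁿG ∩ K = pⁿK`. -/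
def IsPure (p : ℕ) {G : Type*} [AddCommGroup G] (K : AddSubgroup G) : Prop :=
  ∀ n : ℕ, ∀ x ∈ K, (∃ y : G, p ^ n • y = x) → ∃ z ∈ K, p ^ n • z = x

/-- The quotient `G/K` is divisible (equivalently `G = K + pG`). -/
def QuotDivisible (p : ℕ) {G : Type*} [AddCommGroup G] (K : AddSubgroup G) : Prop :=
  ∀ x : G, ∃ y : G, x - p • y ∈ K

/-- The Ulm sequence of `x` has a gap before index `k` (with `h₋₁ = -1`). -/
def HasGapBefore (p : ℕ) {G : Type*} [AddCommGroup G] (x : G) (k : ℕ) : Prop :=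
  if k = 0 then 0 < pHeight p x
  else pHeight p (p ^ (k - 1) • x) + 1 < pHeight p (p ^ k • x)


/-!
An extension of `x ↦ y` to an endomorphism can only raise heights, which gives one direction.

Conversely (Kaplansky's argument), `⟨x⟩ ∩ G¹ = 0` makes `H = h(p^(n-1) x)` finite. Pick `u` with
`p^H u = p^(n-1) x`; as `p^H u` has height exactly `H`, the image of `u` in `G / p^(H+1) G` has
maximal order and generates a direct summand, because `ZMod (p^(H+1))`, the `p^(H+1)`-torsion of the
injective group `ℝ/ℤ`, is injective among groups of that exponent. So an endomorphism `β` sends `u`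
to some `v` with `p^H v = p^(n-1) y`; then `y - β x` is killed by `p^(n-1)` and its Ulm sequence
still dominates that of `x`, so induction on `n` finishes.
-/

namespace ZMod

theorem exists_toAddCircle_eq_of_nsmul_eq_zero {N : ℕ} [NeZero N] {z : UnitAddCircle}
    (hz : N • z = 0) : ∃ j : ZMod N, toAddCircle j = z := by
  obtain ⟨t, rfl⟩ := QuotientAddGroup.mk_surjective z
  obtain ⟨k, hk⟩ := (AddCircle.coe_eq_zero_iff (1 : ℝ)).mp (by rw [AddCircle.coe_nsmul]; exact hz)
  have hkt : (k : ℝ) / N = t := by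
    rw [div_eq_iff (Nat.cast_ne_zero.mpr (NeZero.ne N)), mul_comm]
    simpa [nsmul_eq_mul] using hk
  exact ⟨k, by rw [toAddCircle_intCast, hkt]⟩

theorem lift_zmultiplesHom_one {A : Type*} [AddCommGroup A] {n : ℕ} {v : A} (hv : n • v = 0) :
    lift n ⟨zmultiplesHom A v, by rwa [zmultiplesHom_apply, natCast_zsmul]⟩ 1 = v := by
  rw [← Int.cast_one, lift_coe]
  exact one_zsmul v

end ZMod

section Cyclic

variable {G G' : Type*} [AddCommGroup G] [AddCommGroup G']

noncomputable def zmodEquivZMultiples (x : G) : ZMod (addOrderOf x) ≃+ zmultiples x :=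
  zmodAddEquivOfGenerator (g := ⟨x, mem_zmultiples x⟩) (fun ⟨_, k, hk⟩ => ⟨k, Subtype.ext hk⟩)
    (Nat.card_zmultiples x)

theorem zmodEquivZMultiples_one (x : G) : zmodEquivZMultiples x 1 = ⟨x, mem_zmultiples x⟩ :=
  zmodAddEquivOfGenerator_apply_one _ _

theorem exists_injective_zmultiples_hom_apply_self {x : G} {y : G'}
    (h : addOrderOf y = addOrderOf x) :
    ∃ f : zmultiples x →+ G', Function.Injective f ∧ f ⟨x, mem_zmultiples x⟩ = y := by
  have hy : addOrderOf x • y = 0 := by rw [← h, addOrderOf_nsmul_eq_zero]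
  let φ := ZMod.lift (addOrderOf x)
    ⟨zmultiplesHom G' y, by rwa [zmultiplesHom_apply, natCast_zsmul]⟩
  have hφ : Function.Injective φ := (ZMod.lift_injective (addOrderOf x)).mpr fun m hm => by
    rw [ZMod.intCast_zmod_eq_zero_iff_dvd, ← h]
    exact addOrderOf_dvd_iff_zsmul_eq_zero.mpr hm
  refine ⟨φ.comp (zmodEquivZMultiples x).symm.toAddMonoidHom,
    hφ.comp (zmodEquivZMultiples x).symm.injective, ?_⟩
  rw [AddMonoidHom.comp_apply, AddEquiv.coe_toAddMonoidHom, ← zmodEquivZMultiples_one,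
    AddEquiv.symm_apply_apply]
  exact ZMod.lift_zmultiplesHom_one hy

theorem exists_addMonoidHom_zmod_apply_eq_one {N : ℕ} [NeZero N] {q : G}
    (hq : addOrderOf q = N) (hG : ∀ z : G, N • z = 0) : ∃ π : G →+ ZMod N, π q = 1 := by
  subst hq
  let i : ZMod (addOrderOf q) →+ G :=
    (zmultiples q).subtype.comp (zmodEquivZMultiples q).toAddMonoidHom
  have hi : Function.Injective i := Subtype.val_injective.comp (zmodEquivZMultiples q).injective
  obtain ⟨h, hh⟩ := (Module.Baer.of_divisible UnitAddCircle).extension_property_addMonoidHom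
    i hi ZMod.toAddCircle
  have hrange : ∀ z, h z ∈ (ZMod.toAddCircle (N := addOrderOf q)).range := fun z =>
    ZMod.exists_toAddCircle_eq_of_nsmul_eq_zero (by rw [← map_nsmul, hG, map_zero])
  refine ⟨(AddMonoidHom.ofInjective (ZMod.toAddCircle_injective _)).symm.toAddMonoidHom.comp
    (h.codRestrict _ hrange), ?_⟩
  have hq : i 1 = q := congrArg Subtype.val (zmodEquivZMultiples_one q)
  rw [AddMonoidHom.comp_apply, AddEquiv.coe_toAddMonoidHom, AddEquiv.symm_apply_eq]
  exact Subtype.ext ((congrArg h hq.symm).trans (DFunLike.congr_fun hh 1))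

end Cyclic

section Height

variable {p : ℕ} {G G' : Type*} [AddCommGroup G] [AddCommGroup G']

theorem le_pHeight_iff {m : ℕ} {z : G} : (m : ℕ∞) ≤ pHeight p z ↔ ∃ y : G, p ^ m • y = z := by
  refine ⟨fun h => ?_, fun ⟨y, hy⟩ => le_sSup ⟨m, rfl, y, hy⟩⟩
  by_contra hm
  have hlt : ∀ m' : ℕ, (∃ y : G, p ^ m' • y = z) → m' < m := fun m' ⟨y, hy⟩ => by
    by_contra! hle
    exact hm ⟨p ^ (m' - m) • y, by rw [smul_smul, ← pow_add, Nat.add_sub_cancel' hle, hy]⟩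
  obtain ⟨k, rfl⟩ : ∃ k, m = k + 1 :=
    Nat.exists_eq_succ_of_ne_zero (by rintro rfl; exact hm ⟨z, one_smul ℕ z⟩)
  have hk : pHeight p z ≤ k := sSup_le <| by
    rintro _ ⟨m', rfl, hm'⟩
    exact_mod_cast Nat.lt_succ_iff.mp (hlt m' hm')
  have := h.trans hk
  norm_cast at this
  omega

theorem pHeight_eq_top_iff {z : G} : pHeight p z = ⊤ ↔ ∀ m : ℕ, ∃ y : G, p ^ m • y = z := by
  simp_rw [← le_pHeight_iff]
  exact ENat.eq_top_iff_forall_ge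

theorem pHeight_le_pHeight_map (f : G →+ G') (z : G) : pHeight p z ≤ pHeight p (f z) :=
  sSup_le <| by
    rintro _ ⟨m, rfl, y, rfl⟩
    exact le_pHeight_iff.mpr ⟨f y, (map_nsmul f _ y).symm⟩

theorem le_pHeight_sub {c : ℕ∞} {a b : G} (ha : c ≤ pHeight p a) (hb : c ≤ pHeight p b) :
    c ≤ pHeight p (a - b) := by
  refine ENat.forall_natCast_le_iff_le.mp fun m hm => ?_
  obtain ⟨y, rfl⟩ := le_pHeight_iff.mp (hm.trans ha)
  obtain ⟨y', rfl⟩ := le_pHeight_iff.mp (hm.trans hb)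
  exact le_pHeight_iff.mpr ⟨y - y', smul_sub _ _ _⟩

theorem exists_addMonoidHom_apply_eq_of_pHeight_eq (hp : p.Prime) {e : ℕ} {u : G}
    (hu : pHeight p (p ^ e • u) = e) {v : G'} (hv : p ^ (e + 1) • v = 0) :
    ∃ β : G →+ G', β u = v := by
  have := Fact.mk hp
  let K := (nsmulAddMonoidHom (p ^ (e + 1)) : G →+ G).range
  have hQ : ∀ z : G ⧸ K, p ^ (e + 1) • z = 0 := by
    rintro ⟨z⟩
    exact (QuotientAddGroup.eq_zero_iff _).mpr ⟨z, rfl⟩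
  have hord : addOrderOf (u : G ⧸ K) = p ^ (e + 1) := by
    refine addOrderOf_eq_prime_pow ?_ (hQ u)
    rw [← QuotientAddGroup.mk_nsmul, QuotientAddGroup.eq_zero_iff]
    rintro ⟨y, hy⟩
    have := (le_pHeight_iff.mpr ⟨y, hy⟩).trans_eq hu
    norm_cast at this
    omega
  have : NeZero (p ^ (e + 1)) := ⟨pow_ne_zero _ hp.ne_zero⟩
  obtain ⟨π, hπ⟩ := exists_addMonoidHom_zmod_apply_eq_one hord hQ
  let ρ := ZMod.lift (p ^ (e + 1))
    ⟨zmultiplesHom G' v, by rwa [zmultiplesHom_apply, natCast_zsmul]⟩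
  exact ⟨(ρ.comp π).comp (QuotientAddGroup.mk' K), by
    rw [AddMonoidHom.comp_apply, AddMonoidHom.comp_apply, QuotientAddGroup.mk'_apply, hπ]
    exact ZMod.lift_zmultiplesHom_one hv⟩

theorem exists_addMonoidHom_apply_eq_of_pHeight_le (hp : p.Prime) {x : G} :
    ∀ (n : ℕ) {y : G}, (∀ k < n, pHeight p (p ^ k • x) ≠ ⊤) →
      (∀ k < n, pHeight p (p ^ k • x) ≤ pHeight p (p ^ k • y)) → p ^ n • y = 0 →
      ∃ g : G →+ G, g x = y
  | 0, y, _, _, hy => ⟨0, by simpa using hy.symm⟩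
  | n + 1, y, hfin, hle, hy => by
    set H := (pHeight p (p ^ n • x)).toNat
    have hH : pHeight p (p ^ n • x) = H := (ENat.natCast_toNat (hfin n n.lt_succ_self)).symm
    obtain ⟨u, hu⟩ := le_pHeight_iff.mp hH.ge
    obtain ⟨v, hv⟩ := le_pHeight_iff.mp (hH.ge.trans (hle n n.lt_succ_self))
    have hv' : p ^ (H + 1) • v = 0 := by
      rw [pow_succ', mul_smul, hv, smul_smul, ← pow_succ', hy]
    obtain ⟨β, hβ⟩ := exists_addMonoidHom_apply_eq_of_pHeight_eq hp (hu ▸ hH) hv'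
    have hβx : β (p ^ n • x) = p ^ n • y := by rw [← hu, map_nsmul, hβ, hv]
    obtain ⟨g, hg⟩ := exists_addMonoidHom_apply_eq_of_pHeight_le hp n (y := y - β x)
      (fun k hk => hfin k (by omega))
      (fun k hk => by
        rw [smul_sub, ← map_nsmul]
        exact le_pHeight_sub (hle k (by omega)) (pHeight_le_pHeight_map β _))
      (by rw [smul_sub, ← map_nsmul, hβx, sub_self])
    exact ⟨g + β, by rw [AddMonoidHom.add_apply, hg, sub_add_cancel]⟩

end Height

theorem stmt5_general {G : Type*} [AddCommGroup G] (p : ℕ) (hp : p.Prime)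
    (x : G) (n : ℕ) (hx : addOrderOf x = p ^ n)
    (hU : ∀ z ∈ zmultiples x, (∀ m : ℕ, ∃ y : G, p ^ m • y = z) → z = 0) :
    InP (zmultiples x) ↔
      ∀ y : G, addOrderOf y = p ^ n →
        ∀ k : ℕ, pHeight p (p ^ k • x) ≤ pHeight p (p ^ k • y) := by
  constructor
  · intro hP y hy k
    obtain ⟨f, hf, hfx⟩ := exists_injective_zmultiples_hom_apply_self (hy.trans hx.symm)
    obtain ⟨g, hg⟩ := hP f hf
    have hgx : g x = y := (hg _).trans hfx
    simpa [hgx] using pHeight_le_pHeight_map g (p ^ k • x)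
  · intro hUlm f hf
    set y := f ⟨x, mem_zmultiples x⟩
    have hy : addOrderOf y = p ^ n := by
      rw [addOrderOf_injective f hf, AddSubgroup.addOrderOf_mk, hx]
    have hfin : ∀ k < n, pHeight p (p ^ k • x) ≠ ⊤ := fun k hk htop => by
      have hkx := hU _ (nsmul_mem (mem_zmultiples x) _) (pHeight_eq_top_iff.mp htop)
      have hnk := (Nat.pow_dvd_pow_iff_le_right hp.one_lt).mp
        (hx ▸ addOrderOf_dvd_of_nsmul_eq_zero hkx)
      omega
    obtain ⟨g, hgx⟩ := exists_addMonoidHom_apply_eq_of_pHeight_le hp n hfin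
      (fun k _ => hUlm y hy k) (by rw [← hy, addOrderOf_nsmul_eq_zero])
    refine ⟨g, ?_⟩
    rintro ⟨_, k, rfl⟩
    exact (map_zsmul g k x).trans (hgx ▸ (map_zsmul f k _).symm)

theorem stmt5 {G : Type*} [AddCommGroup G] (p : ℕ) (hp : p.Prime) (hG : IsPGrp p G)
    (x : G) (n : ℕ) (hx : addOrderOf x = p ^ n)
    (hU : ∀ z ∈ zmultiples x, (∀ m : ℕ, ∃ y : G, p ^ m • y = z) → z = 0) :
    InP (zmultiples x) ↔
      ∀ y : G, addOrderOf y = p ^ n →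
        ∀ k : ℕ, pHeight p (p ^ k • x) ≤ pHeight p (p ^ k • y) :=
  stmt5_general p hp x n hx hU
end

section
/- Let G be an abelian p-group and x ∈ G of exponent n with ⟨x⟩ ∩ G¹ = 0. If the Ulm sequence of x has at least two non-trivial gaps, then there exists y ∈ G with exp(y) = exp(x) such that U(x) is not componentwise ≤ U(y); consequently ⟨x⟩ is not in P(G). -/
open AddSubgroup

/-!
The second gap at `k₂` lets us write `p ^ k₂ • x = p ^ k₂ • z` with every `p ^ i • z`, `i < k₂`,
strictly higher than `p ^ i • x`; so `y := x - z` is killed by `p ^ k₂` and copies the heights of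
`x` below `k₂`. The first gap gives `p ^ k₁ • y = p ^ (k₁ + 1) • v`, and `Y := z + v` still has
order `p ^ n` while `p ^ k₁ • Y` has the height of `p ^ k₁ • v`, which is smaller than that of
`p ^ k₁ • x`. Homomorphisms do not lower heights, so the injective map `x ↦ Y` on `⟨x⟩` does not
extend to `G`.
-/

theorem pow_smul_ne_zero_of_addOrderOf_eq {G : Type*} [AddMonoid G] {p n k : ℕ} (hp : 1 < p)
    {x : G} (hx : addOrderOf x = p ^ n) (hk : k < n) : p ^ k • x ≠ 0 :=
  nsmul_ne_zero_of_lt_addOrderOf (pow_ne_zero _ (by omega)) (hx ▸ Nat.pow_lt_pow_right hp hk)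

section PHeight

variable {G : Type*} [AddCommGroup G] {p : ℕ}

theorem natCast_le_pHeight_iff {x : G} {m : ℕ} :
    (m : ℕ∞) ≤ pHeight p x ↔ ∃ y : G, p ^ m • y = x := by
  refine ⟨fun h => ?_, fun ⟨y, hy⟩ => le_sSup ⟨m, rfl, y, hy⟩⟩
  obtain rfl | hm := Nat.eq_zero_or_pos m
  · exact ⟨x, by simp⟩
  obtain ⟨_, ⟨m', rfl, y, hy⟩, hlt⟩ := lt_sSup_iff.mp <|
    (show ((m - 1 : ℕ) : ℕ∞) < m by exact_mod_cast Nat.sub_one_lt hm.ne').trans_le h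
  have hmm' : m ≤ m' := by
    have : m - 1 < m' := by exact_mod_cast hlt
    omega
  exact ⟨p ^ (m' - m) • y, by rw [smul_smul, ← pow_add, Nat.add_sub_cancel' hmm', hy]⟩

theorem le_pHeight_of_forall {A : ℕ∞} {x : G}
    (h : ∀ m : ℕ, (m : ℕ∞) ≤ A → ∃ y : G, p ^ m • y = x) : A ≤ pHeight p x :=
  ENat.forall_natCast_le_iff_le.mp fun m hm => natCast_le_pHeight_iff.mpr (h m hm)

theorem natCast_le_pHeight_pow_smul (x : G) (k : ℕ) : (k : ℕ∞) ≤ pHeight p (p ^ k • x) :=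
  natCast_le_pHeight_iff.mpr ⟨x, rfl⟩

@[simp]
theorem pHeight_zero : pHeight p (0 : G) = ⊤ :=
  top_le_iff.mp <| le_pHeight_of_forall fun _ _ => ⟨0, smul_zero _⟩

theorem ne_zero_of_pHeight_ne_top {x : G} (h : pHeight p x ≠ ⊤) : x ≠ 0 := by
  rintro rfl
  exact h pHeight_zero

theorem pHeight_le_pHeight_map_s6 {H : Type*} [AddCommGroup H] (f : G →+ H) (x : G) :
    pHeight p x ≤ pHeight p (f x) :=
  le_pHeight_of_forall fun _ hm =>
    let ⟨y, hy⟩ := natCast_le_pHeight_iff.mp hm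
    ⟨f y, by rw [← map_nsmul, hy]⟩

@[simp]
theorem pHeight_neg (x : G) : pHeight p (-x) = pHeight p x :=
  le_antisymm (by simpa using pHeight_le_pHeight_map_s6 (p := p) negAddMonoidHom (-x))
    (pHeight_le_pHeight_map_s6 negAddMonoidHom x)

theorem min_le_pHeight_add (a b : G) :
    min (pHeight p a) (pHeight p b) ≤ pHeight p (a + b) :=
  le_pHeight_of_forall fun _ hm =>
    let ⟨y, hy⟩ := natCast_le_pHeight_iff.mp (hm.trans (min_le_left _ _))
    let ⟨y', hy'⟩ := natCast_le_pHeight_iff.mp (hm.trans (min_le_right _ _))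
    ⟨y + y', by rw [smul_add, hy, hy']⟩

theorem pHeight_add_of_lt {a b : G} (h : pHeight p a < pHeight p b) :
    pHeight p (a + b) = pHeight p a := by
  refine le_antisymm (not_lt.mp fun hlt => ?_) (min_eq_left h.le ▸ min_le_pHeight_add a b)
  have := min_le_pHeight_add (p := p) (a + b) (-b)
  rw [add_neg_cancel_right, pHeight_neg] at this
  exact (lt_min hlt h).not_ge this

theorem pHeight_sub_of_lt {a b : G} (h : pHeight p a < pHeight p b) :
    pHeight p (a - b) = pHeight p a := by
  rw [sub_eq_add_neg, pHeight_add_of_lt (by rwa [pHeight_neg])]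

theorem pHeight_add_le_pHeight_pow_smul (x : G) (k : ℕ) :
    pHeight p x + k ≤ pHeight p (p ^ k • x) := by
  refine le_pHeight_of_forall fun m hm => ?_
  rcases le_or_gt m k with hmk | hkm
  · exact ⟨p ^ (k - m) • x, by rw [smul_smul, ← pow_add, Nat.add_sub_cancel' hmk]⟩
  · have : ((m - k : ℕ) : ℕ∞) ≤ pHeight p x := by
      rw [ENat.natCast_sub, tsub_le_iff_right]
      exact hm
    obtain ⟨y, hy⟩ := natCast_le_pHeight_iff.mp this
    exact ⟨y, by rw [← hy, smul_smul, ← pow_add, Nat.add_sub_cancel' hkm.le]⟩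

theorem pHeight_pow_smul_add_le (x : G) {i j : ℕ} (hij : i ≤ j) :
    pHeight p (p ^ i • x) + (j - i : ℕ) ≤ pHeight p (p ^ j • x) := by
  simpa [smul_smul, ← pow_add, Nat.sub_add_cancel hij] using
    pHeight_add_le_pHeight_pow_smul (p := p) (p ^ i • x) (j - i)

theorem pHeight_le_pHeight_pow_smul (x : G) (k : ℕ) : pHeight p x ≤ pHeight p (p ^ k • x) :=
  le_self_add.trans (pHeight_add_le_pHeight_pow_smul x k)

theorem pHeight_lt_pHeight_of_smul_eq {x y : G} (hy : p • y = x) (hx : pHeight p x ≠ ⊤) :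
    pHeight p y < pHeight p x := by
  have h := pHeight_add_le_pHeight_pow_smul (p := p) y 1
  rw [pow_one, hy, Nat.cast_one] at h
  exact (ENat.add_one_le_iff (ne_top_of_le_ne_top hx (le_self_add.trans h))).mp h

end PHeight

section UlmSequence

variable {G : Type*} [AddCommGroup G] {p : ℕ}

theorem HasGapBefore.natCast_lt_pHeight {x : G} {k : ℕ} (hg : HasGapBefore p x k) :
    (k : ℕ∞) < pHeight p (p ^ k • x) := by
  unfold HasGapBefore at hg
  split_ifs at hg with hk
  · simpa [hk] using hg
  · calc (k : ℕ∞) = ((k - 1 : ℕ) : ℕ∞) + 1 := by norm_cast; omega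
      _ ≤ pHeight p (p ^ (k - 1) • x) + 1 := by gcongr; exact natCast_le_pHeight_pow_smul x _
      _ < _ := hg

theorem HasGapBefore.exists_pow_smul_eq {x : G} {k : ℕ} (hg : HasGapBefore p x k) (hk : k ≠ 0)
    (hfin : pHeight p (p ^ (k - 1) • x) ≠ ⊤) :
    ∃ z : G, p ^ k • z = p ^ k • x ∧ ∀ i < k, pHeight p (p ^ i • x) < pHeight p (p ^ i • z) := by
  rw [HasGapBefore, if_neg hk] at hg
  lift pHeight p (p ^ (k - 1) • x) to ℕ using hfin with h hh
  obtain ⟨w, hw⟩ : ∃ w : G, p ^ (h + 2) • w = p ^ k • x :=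
    natCast_le_pHeight_iff.mp (by exact_mod_cast Order.add_one_le_of_lt hg)
  have hkh : k - 1 ≤ h := by exact_mod_cast hh ▸ natCast_le_pHeight_pow_smul x (k - 1)
  refine ⟨p ^ (h + 2 - k) • w, ?_, fun i hi => ?_⟩
  · rw [smul_smul, ← pow_add, Nat.add_sub_cancel' (by omega), hw]
  have hxi := pHeight_pow_smul_add_le (p := p) x (show i ≤ k - 1 by omega)
  rw [← hh] at hxi
  have hzi : ((h + 2 - k + i : ℕ) : ℕ∞) ≤ pHeight p (p ^ i • p ^ (h + 2 - k) • w) :=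
    natCast_le_pHeight_iff.mpr ⟨w, by rw [smul_smul, ← pow_add, add_comm]⟩
  refine lt_of_lt_of_le ?_ hzi
  lift pHeight p (p ^ i • x) to ℕ using
    ne_top_of_le_ne_top (ENat.natCast_ne_top h) (le_self_add.trans hxi) with a
  have : a + (k - 1 - i) ≤ h := by exact_mod_cast hxi
  exact_mod_cast (by omega : a < h + 2 - k + i)

theorem addOrderOf_sub_add_eq [Fact p.Prime] {x y v : G} {n k₁ k₂ : ℕ}
    (hx : addOrderOf x = p ^ n) (h12 : k₁ < k₂) (h2n : k₂ < n) (hy : p ^ k₂ • y = 0)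
    (hyx : pHeight p (p ^ (k₂ - 1) • y) < pHeight p (p ^ k₂ • x))
    (hv : p ^ (k₁ + 1) • v = p ^ k₁ • y) : addOrderOf (x - y + v) = p ^ n := by
  have hy_zero : ∀ j, k₂ ≤ j → p ^ j • y = 0 := fun j hj => by
    rw [← Nat.sub_add_cancel hj, pow_add, ← smul_smul, hy, smul_zero]
  have hpow : ∀ j, k₁ < j → p ^ j • (x - y + v) = p ^ j • x - p ^ j • y + p ^ (j - 1) • y := by
    intro j hj
    have hvj : p ^ j • v = p ^ (j - 1) • y := by
      rw [← Nat.sub_add_cancel (show k₁ + 1 ≤ j by omega), pow_add, ← smul_smul, hv, smul_smul,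
        ← pow_add]
      congr 2
    rw [smul_add, smul_sub, hvj]
  have hn : p ^ n • (x - y + v) = 0 := by
    rw [hpow n (by omega), hy_zero n (by omega), hy_zero (n - 1) (by omega), ← hx,
      addOrderOf_nsmul_eq_zero, sub_zero, add_zero]
  have hn1 : p ^ (n - 1) • (x - y + v) ≠ 0 := by
    rw [hpow (n - 1) (by omega), hy_zero (n - 1) (by omega), sub_zero]
    rcases (by omega : k₂ ≤ n - 1 - 1 ∨ k₂ = n - 1) with hk | rfl
    · rw [hy_zero _ hk, add_zero]
      exact pow_smul_ne_zero_of_addOrderOf_eq (Fact.out : p.Prime).one_lt hx (by omega)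
    · refine ne_zero_of_pHeight_ne_top (p := p) ?_
      rw [add_comm, pHeight_add_of_lt hyx]
      exact hyx.ne_top
  rw [← Nat.sub_add_cancel (show 1 ≤ n by omega)] at hn ⊢
  exact addOrderOf_eq_prime_pow hn1 hn

theorem exists_addOrderOf_eq_pHeight_pow_smul_lt [Fact p.Prime] {x z : G} {n k₁ k₂ : ℕ}
    (hx : addOrderOf x = p ^ n) (h12 : k₁ < k₂) (h2n : k₂ < n)
    (hzx : p ^ k₂ • z = p ^ k₂ • x)
    (hxz : ∀ i < k₂, pHeight p (p ^ i • x) < pHeight p (p ^ i • z))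
    (hk₁ : (k₁ : ℕ∞) < pHeight p (p ^ k₁ • x)) :
    ∃ Y : G, addOrderOf Y = p ^ n ∧ pHeight p (p ^ k₁ • Y) < pHeight p (p ^ k₁ • x) := by
  have hy : p ^ k₂ • (x - z) = 0 := by rw [smul_sub, hzx, sub_self]
  have hy_height : ∀ i < k₂, pHeight p (p ^ i • (x - z)) = pHeight p (p ^ i • x) := fun i hi => by
    rw [smul_sub, pHeight_sub_of_lt (hxz i hi)]
  have hyx : pHeight p (p ^ (k₂ - 1) • (x - z)) < pHeight p (p ^ k₂ • x) :=
    calc pHeight p (p ^ (k₂ - 1) • (x - z)) < pHeight p (p ^ (k₂ - 1) • z) := by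
          rw [hy_height _ (by omega)]; exact hxz _ (by omega)
      _ ≤ pHeight p (p ^ 1 • p ^ (k₂ - 1) • z) := pHeight_le_pHeight_pow_smul _ 1
      _ = pHeight p (p ^ k₂ • x) := by
          rw [smul_smul, ← pow_add, Nat.add_sub_cancel' (by omega), hzx]
  obtain ⟨v, hv⟩ : ∃ v : G, p ^ (k₁ + 1) • v = p ^ k₁ • (x - z) :=
    natCast_le_pHeight_iff.mp <| by
      rw [hy_height k₁ h12]; exact_mod_cast Order.add_one_le_of_lt hk₁
  have hv_height : pHeight p (p ^ k₁ • v) < pHeight p (p ^ k₁ • x) := by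
    rw [← hy_height k₁ h12]
    refine pHeight_lt_pHeight_of_smul_eq (by rw [smul_smul, ← pow_succ', hv]) ?_
    rw [hy_height k₁ h12]
    exact (hxz k₁ h12).ne_top
  refine ⟨x - (x - z) + v, addOrderOf_sub_add_eq hx h12 h2n hy hyx hv, ?_⟩
  rw [sub_sub_cancel, smul_add, add_comm, pHeight_add_of_lt (hv_height.trans (hxz k₁ h12))]
  exact hv_height

end UlmSequence

theorem exists_injective_zmultiples_hom {G : Type*} [AddCommGroup G] {x y : G}
    (h : addOrderOf y = addOrderOf x) :
    ∃ f : zmultiples x →+ G, Function.Injective f ∧ f ⟨x, mem_zmultiples x⟩ = y := by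
  let φ : ℤ →+ zmultiples x :=
    (zmultiplesHom G x).codRestrict (zmultiples x) fun m => zsmul_mem_zmultiples x m
  have hφ : Function.Surjective φ := by
    rintro ⟨_, m, rfl⟩
    exact ⟨m, rfl⟩
  have hker : φ.ker = (zmultiplesHom G y).ker := by
    ext m
    change φ m = 0 ↔ m • y = 0
    rw [← Subtype.coe_inj, ZeroMemClass.coe_zero]
    change m • x = 0 ↔ _
    rw [← addOrderOf_dvd_iff_zsmul_eq_zero, ← addOrderOf_dvd_iff_zsmul_eq_zero, h]
  let e := (QuotientAddGroup.quotientKerEquivOfSurjective φ hφ).symm.trans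
    (QuotientAddGroup.quotientAddEquivOfEq hker)
  refine ⟨(QuotientAddGroup.kerLift _).comp e.toAddMonoidHom,
    (QuotientAddGroup.kerLift_injective _).comp e.injective, ?_⟩
  have hx : (⟨x, mem_zmultiples x⟩ : zmultiples x) = φ 1 := Subtype.ext (one_zsmul x).symm
  have h1 : (QuotientAddGroup.quotientKerEquivOfSurjective φ hφ).symm (φ 1) = (1 : ℤ) :=
    (AddEquiv.symm_apply_eq _).mpr rfl
  simp [e, hx, h1]

theorem not_inP_zmultiples_of_pHeight_lt {G : Type*} [AddCommGroup G] {p : ℕ} {x y : G}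
    (hy : addOrderOf y = addOrderOf x) {k : ℕ}
    (hlt : pHeight p (p ^ k • y) < pHeight p (p ^ k • x)) : ¬ InP (zmultiples x) := by
  intro hP
  obtain ⟨f, hf, hfx⟩ := exists_injective_zmultiples_hom hy
  obtain ⟨g, hg⟩ := hP f hf
  have hgx : g x = y := (hg _).trans hfx
  have := pHeight_le_pHeight_map_s6 (p := p) g (p ^ k • x)
  rw [map_nsmul, hgx] at this
  exact hlt.not_ge this

theorem stmt6_general {G : Type*} [AddCommGroup G] (p : ℕ) (hp : p.Prime)
    (x : G) (n : ℕ) (hx : addOrderOf x = p ^ n)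
    (hU : ∀ z ∈ zmultiples x, (∀ m : ℕ, ∃ y : G, p ^ m • y = z) → z = 0)
    (k₁ k₂ : ℕ) (h12 : k₁ < k₂) (h2n : k₂ < n)
    (hg1 : HasGapBefore p x k₁) (hg2 : HasGapBefore p x k₂) :
    (∃ y : G, addOrderOf y = p ^ n ∧
        ∃ k : ℕ, pHeight p (p ^ k • y) < pHeight p (p ^ k • x)) ∧
      ¬ InP (zmultiples x) := by
  have : Fact p.Prime := ⟨hp⟩
  have hfin : pHeight p (p ^ (k₂ - 1) • x) ≠ ⊤ := fun htop =>
    pow_smul_ne_zero_of_addOrderOf_eq hp.one_lt hx (by omega : k₂ - 1 < n) <|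
      hU _ (nsmul_mem (mem_zmultiples x) _) fun _ => natCast_le_pHeight_iff.mp (htop ▸ le_top)
  obtain ⟨z, hzx, hxz⟩ := hg2.exists_pow_smul_eq (by omega) hfin
  obtain ⟨Y, hY, hlt⟩ :=
    exists_addOrderOf_eq_pHeight_pow_smul_lt hx h12 h2n hzx hxz hg1.natCast_lt_pHeight
  exact ⟨⟨Y, hY, k₁, hlt⟩, not_inP_zmultiples_of_pHeight_lt (hY.trans hx.symm) hlt⟩

theorem stmt6 {G : Type*} [AddCommGroup G] (p : ℕ) (hp : p.Prime) (hG : IsPGrp p G)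
    (x : G) (n : ℕ) (hx : addOrderOf x = p ^ n)
    (hU : ∀ z ∈ zmultiples x, (∀ m : ℕ, ∃ y : G, p ^ m • y = z) → z = 0)
    (k₁ k₂ : ℕ) (h12 : k₁ < k₂) (h2n : k₂ < n)
    (hg1 : HasGapBefore p x k₁) (hg2 : HasGapBefore p x k₂) :
    (∃ y : G, addOrderOf y = p ^ n ∧
        ∃ k : ℕ, pHeight p (p ^ k • y) < pHeight p (p ^ k • x)) ∧
      ¬ InP (zmultiples x) :=
  stmt6_general p hp x n hx hU k₁ k₂ h12 h2n hg1 hg2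
end
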